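/- A (4,2)-flexipath (L, Q_1, …, Q_n, R) in a matroid M has at most one specially placed step. That is: (a) at most one index i satisfies ⊓(L,R)=2 and ⊓(L,Q_i)=2=⊓(R,Q_i); (b) at most one index i satisfies ⊓*(L,R)=2 and ⊓*(L,Q_i)=2=⊓*(R,Q_i); and (c) not both types can occur, since ⊓(L,R)+⊓*(L,R) ≤ 3. -/

import Mathlib

open Set

namespace Matroid

variable {α : Type*}

/-- The rank of a set in a matroid: the supremum of the cardinalities of its
independent subsets. -/
noncomputable def rFun (M : Matroid α) (X : Set α) : ℕ :=
  sSup {n | ∃ I ⊆ X, M.Indep I ∧ I.ncard = n}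

/-- The connectivity function λ of a matroid. -/
noncomputable def conn (M : Matroid α) (A : Set α) : ℤ :=
  (M.rFun A : ℤ) + M.rFun (M.E \ A) - M.rFun M.E

/-- The local connectivity ⊓(X,Y) = r(X) + r(Y) - r(X ∪ Y). -/
noncomputable def localConn (M : Matroid α) (X Y : Set α) : ℤ :=
  (M.rFun X : ℤ) + M.rFun Y - M.rFun (X ∪ Y)

/-- The local coconnectivity ⊓*(X,Y): the local connectivity in the dual matroid. -/
noncomputable def localCoconn (M : Matroid α) (X Y : Set α) : ℤ :=
  M✶.localConn X Y

/-- `(L, Q 0, ..., Q (n-1), R)` is a path of 4-separations in `M`: it is an ordered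
partition of the ground set, κ(L,R) = 3 (the minimum of λ over sets sandwiched between
`L` and `E \ R` is 3; since λ(L) = 3 is among the `steps` conditions, it suffices to
require that 3 is a lower bound), and every initial union is exactly 3-separating. -/
structure Is4Path (M : Matroid α) (L R : Set α) {n : ℕ} (Q : Fin n → Set α) : Prop where
  ground_eq : L ∪ (⋃ i, Q i) ∪ R = M.E
  disj_LR : Disjoint L R
  disj_LQ : ∀ i, Disjoint L (Q i)
  disj_RQ : ∀ i, Disjoint R (Q i)
  disj_QQ : ∀ i j, i ≠ j → Disjoint (Q i) (Q j)
  nonempty_L : L.Nonempty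
  nonempty_R : R.Nonempty
  nonempty_Q : ∀ i, (Q i).Nonempty
  kappa_ge : ∀ Z, L ⊆ Z → Z ⊆ M.E \ R → 3 ≤ M.conn Z
  steps : ∀ k ≤ n, M.conn (L ∪ ⋃ i ∈ {i : Fin n | (i : ℕ) < k}, Q i) = 3

/-- A 4-flexipath: every permutation of the internal steps yields a path of
4-separations. -/
def Is4Flexipath (M : Matroid α) (L R : Set α) {n : ℕ} (Q : Fin n → Set α) : Prop :=
  ∀ σ : Equiv.Perm (Fin n), Is4Path M L R (Q ∘ σ)

/-- A `(4,c)`-flexipath: a 4-flexipath with λ(Q i) = c for all `i` and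
λ(Q i ∪ Q j) > c for all distinct `i`, `j`. -/
structure Is4cFlexipath (M : Matroid α) (c : ℤ) (L R : Set α) {n : ℕ}
    (Q : Fin n → Set α) : Prop where
  flexi : Is4Flexipath M L R Q
  conn_step : ∀ i, M.conn (Q i) = c
  conn_two_steps : ∀ i j, i ≠ j → c < M.conn (Q i ∪ Q j)

/-- `Q i` is a specially placed step of the `(4,2)`-flexipath `(L, Q, R)`. -/
def SpeciallyPlaced (M : Matroid α) (L R : Set α) {n : ℕ} (Q : Fin n → Set α) (i : Fin n) :
    Prop :=
  (M.localConn L R = 2 ∧ M.localConn L (Q i) = 2 ∧ M.localConn R (Q i) = 2) ∨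
  (M.localCoconn L R = 2 ∧ M.localCoconn L (Q i) = 2 ∧ M.localCoconn R (Q i) = 2)

section AuxiliaryLemmas

variable {M : Matroid α} {X Y I J A B : Set α}

lemma indep_finite [M.Finite] (hI : M.Indep I) : I.Finite :=
  M.ground_finite.subset hI.subset_ground

lemma rFun_set_nonempty (M : Matroid α) (X : Set α) :
    {n | ∃ I ⊆ X, M.Indep I ∧ I.ncard = n}.Nonempty :=
  ⟨0, ∅, empty_subset X, M.empty_indep, ncard_empty α⟩

lemma rFun_set_bddAbove (M : Matroid α) [M.Finite] (X : Set α) :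
    BddAbove {n | ∃ I ⊆ X, M.Indep I ∧ I.ncard = n} := by
  refine ⟨M.E.ncard, fun n hn => ?_⟩
  obtain ⟨I, hIX, hI, rfl⟩ := hn
  exact ncard_le_ncard hI.subset_ground M.ground_finite

lemma ncard_le_rFun [M.Finite] (hI : M.Indep I) (hIX : I ⊆ X) : I.ncard ≤ M.rFun X :=
  le_csSup (rFun_set_bddAbove M X) ⟨I, hIX, hI, rfl⟩

lemma exists_rFun (M : Matroid α) [M.Finite] (X : Set α) :
    ∃ I ⊆ X, M.Indep I ∧ I.ncard = M.rFun X :=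
  Nat.sSup_mem (rFun_set_nonempty M X) (rFun_set_bddAbove M X)

lemma exists_rFun_superset [M.Finite] (hI : M.Indep I) (hIX : I ⊆ X) :
    ∃ J, I ⊆ J ∧ J ⊆ X ∧ M.Indep J ∧ J.ncard = M.rFun X := by
  have hne : ({n | ∃ J, I ⊆ J ∧ J ⊆ X ∧ M.Indep J ∧ J.ncard = n}).Nonempty :=
    ⟨I.ncard, I, Subset.rfl, hIX, hI, rfl⟩
  have hbdd : BddAbove {n | ∃ J, I ⊆ J ∧ J ⊆ X ∧ M.Indep J ∧ J.ncard = n} := by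
    refine ⟨M.E.ncard, fun n hn => ?_⟩
    obtain ⟨J, _, _, hJ, rfl⟩ := hn
    exact ncard_le_ncard hJ.subset_ground M.ground_finite
  obtain ⟨J, hIJ, hJX, hJ, hJcard⟩ := Nat.sSup_mem hne hbdd
  refine ⟨J, hIJ, hJX, hJ, le_antisymm (ncard_le_rFun hJ hJX) ?_⟩
  by_contra hlt
  rw [not_le] at hlt
  obtain ⟨K, hKX, hK, hKcard⟩ := exists_rFun M X
  have hlt' : J.encard < K.encard := by
    rw [← (indep_finite hJ).cast_ncard_eq, ← (indep_finite hK).cast_ncard_eq]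
    exact_mod_cast hKcard ▸ hlt
  obtain ⟨e, he, hins⟩ := hJ.augment hK hlt'
  have hmem : (insert e J).ncard ≤ sSup {n | ∃ J, I ⊆ J ∧ J ⊆ X ∧ M.Indep J ∧ J.ncard = n} :=
    le_csSup hbdd ⟨insert e J, hIJ.trans (subset_insert e J),
      insert_subset (hKX he.1) hJX, hins, rfl⟩
  rw [ncard_insert_of_notMem he.2 (indep_finite hJ)] at hmem
  omega

lemma rFun_mono (M : Matroid α) [M.Finite] (h : X ⊆ Y) : M.rFun X ≤ M.rFun Y := by
  obtain ⟨I, hIX, hI, hcard⟩ := exists_rFun M X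
  exact hcard ▸ ncard_le_rFun hI (hIX.trans h)

lemma rFun_submod (M : Matroid α) [M.Finite] (X Y : Set α) :
    M.rFun (X ∪ Y) + M.rFun (X ∩ Y) ≤ M.rFun X + M.rFun Y := by
  obtain ⟨I, hIXY, hI, hIcard⟩ := exists_rFun M (X ∩ Y)
  obtain ⟨J, hIJ, hJXY, hJ, hJcard⟩ :=
    exists_rFun_superset hI (hIXY.trans (inter_subset_left.trans subset_union_left))
  have hJf : J.Finite := indep_finite hJ
  have h1 : (J ∩ X).ncard ≤ M.rFun X :=
    ncard_le_rFun (hJ.subset inter_subset_left) inter_subset_right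
  have h2 : (J ∩ Y).ncard ≤ M.rFun Y :=
    ncard_le_rFun (hJ.subset inter_subset_left) inter_subset_right
  have hu : (J ∩ X) ∪ (J ∩ Y) = J := by
    rw [← inter_union_distrib_left]; exact inter_eq_left.mpr hJXY
  have hkey := ncard_union_add_ncard_inter (J ∩ X) (J ∩ Y)
    (hJf.subset inter_subset_left) (hJf.subset inter_subset_left)
  rw [hu] at hkey
  have hI' : I.ncard ≤ ((J ∩ X) ∩ (J ∩ Y)).ncard := by
    refine ncard_le_ncard ?_ ((hJf.subset inter_subset_left).subset inter_subset_left)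
    exact subset_inter (subset_inter hIJ (hIXY.trans inter_subset_left))
      (subset_inter hIJ (hIXY.trans inter_subset_right))
  omega

lemma rFun_empty (M : Matroid α) [M.Finite] : M.rFun ∅ = 0 := by
  obtain ⟨I, hI, _, hcard⟩ := exists_rFun M ∅
  rw [← hcard, subset_empty_iff.mp hI, ncard_empty]

lemma Base.ncard_eq_rFun [M.Finite] (hB : M.IsBase B) : B.ncard = M.rFun M.E := by
  refine le_antisymm (ncard_le_rFun hB.indep hB.subset_ground) ?_
  obtain ⟨I, hIE, hI, hcard⟩ := exists_rFun M M.E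
  rw [← hcard]
  by_contra hlt
  rw [not_le] at hlt
  have hlt' : B.encard < I.encard := by
    rw [← (indep_finite hB.indep).cast_ncard_eq, ← (indep_finite hI).cast_ncard_eq]
    exact_mod_cast hlt
  obtain ⟨e, he, hins⟩ := hB.indep.augment hI hlt'
  refine he.2 ?_
  have heq := hB.eq_of_subset_indep hins (subset_insert e B)
  rw [heq]; exact mem_insert e B

private lemma ncard_split {E B X : Set α} (hB : B ⊆ E) (hX : X ⊆ E) (hfin : E.Finite) :
    B.ncard = (B ∩ X).ncard + (B ∩ (E \ X)).ncard := by
  have hBfin := hfin.subset hB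
  rw [← ncard_union_eq (Disjoint.mono inter_subset_right inter_subset_right disjoint_sdiff_right)
      (hBfin.subset inter_subset_left) (hBfin.subset inter_subset_left),
    ← inter_union_distrib_left, union_diff_cancel hX, inter_eq_left.mpr hB]

lemma dual_rFun_add (M : Matroid α) [M.Finite] (hX : X ⊆ M.E) :
    M✶.rFun X + M.rFun M.E = X.ncard + M.rFun (M.E \ X) := by
  have hEfin := M.ground_finite
  have hXfin := hEfin.subset hX
  refine le_antisymm ?_ ?_
  · obtain ⟨J, hJX, hJ, hJcard⟩ := exists_rFun M✶ X
    obtain ⟨hJE, B', hB', hJB'⟩ := dual_indep_iff_exists'.mp hJ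
    have hB'fin := hEfin.subset hB'.subset_ground
    have hBcard := Base.ncard_eq_rFun hB'
    have h1 : (B' ∩ (M.E \ X)).ncard ≤ M.rFun (M.E \ X) :=
      ncard_le_rFun (hB'.indep.subset inter_subset_left) inter_subset_right
    have h2 : B'.ncard = (B' ∩ X).ncard + (B' ∩ (M.E \ X)).ncard :=
      ncard_split hB'.subset_ground hX hEfin
    have h3 : J ⊆ X \ B' := subset_diff.mpr ⟨hJX, hJB'⟩
    have h4 : (X \ B').ncard + (X ∩ B').ncard = X.ncard := by
      rw [← diff_self_inter]
      exact ncard_diff_add_ncard_of_subset inter_subset_left hXfin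
    have h5 : J.ncard ≤ (X \ B').ncard := ncard_le_ncard h3 (hXfin.subset diff_subset)
    have h6 : (B' ∩ X).ncard = (X ∩ B').ncard := by rw [inter_comm]
    omega
  · obtain ⟨I0, hI0sub, hI0, hI0card⟩ := exists_rFun M (M.E \ X)
    obtain ⟨B0, hI0B0, hB0E, hB0, hB0card⟩ := exists_rFun_superset hI0 (hI0sub.trans diff_subset)
    obtain ⟨B, hB, hB0B⟩ := hB0.exists_isBase_superset
    have hBfin := hEfin.subset hB.subset_ground
    have hBB0 : B0 = B :=
      eq_of_subset_of_ncard_le hB0B (le_of_eq ((Base.ncard_eq_rFun hB).trans hB0card.symm)) hBfin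
    have hBbase : M.IsBase B0 := hBB0 ▸ hB
    have hdualI : M✶.Indep (X \ B0) :=
      dual_indep_iff_exists'.mpr ⟨diff_subset.trans hX, B0, hBbase, disjoint_sdiff_left⟩
    have h5 : (X \ B0).ncard ≤ M✶.rFun X := ncard_le_rFun hdualI diff_subset
    have h6 : (B0 ∩ (M.E \ X)).ncard = M.rFun (M.E \ X) := by
      refine le_antisymm (ncard_le_rFun (hB0.subset inter_subset_left) inter_subset_right) ?_
      rw [← hI0card]
      exact ncard_le_ncard (subset_inter hI0B0 hI0sub)
        ((hEfin.subset hB0E).subset inter_subset_left)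
    have h7 : B0.ncard = (B0 ∩ X).ncard + (B0 ∩ (M.E \ X)).ncard :=
      ncard_split hB0E hX hEfin
    have h8 : (X \ B0).ncard + (X ∩ B0).ncard = X.ncard := by
      rw [← diff_self_inter]
      exact ncard_diff_add_ncard_of_subset inter_subset_left hXfin
    have h9 : (B0 ∩ X).ncard = (X ∩ B0).ncard := by rw [inter_comm]
    omega

lemma conn_dual (M : Matroid α) [M.Finite] (hA : A ⊆ M.E) : M✶.conn A = M.conn A := by
  have h1 := M.dual_rFun_add hA
  have h2 := M.dual_rFun_add (diff_subset : M.E \ A ⊆ M.E)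
  have h3 := M.dual_rFun_add (Subset.rfl : M.E ⊆ M.E)
  rw [diff_diff_cancel_left hA] at h2
  rw [diff_self, rFun_empty] at h3
  have h5 : (M.E \ A).ncard + A.ncard = M.E.ncard :=
    ncard_diff_add_ncard_of_subset hA M.ground_finite
  simp only [conn, dual_ground]
  omega

lemma conn_eq_conn_compl (M : Matroid α) (hA : A ⊆ M.E) : M.conn (M.E \ A) = M.conn A := by
  simp only [conn]
  rw [diff_diff_cancel_left hA]
  ring

lemma localConn_comm (M : Matroid α) (X Y : Set α) : M.localConn X Y = M.localConn Y X := by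
  simp only [localConn]; rw [union_comm]; ring

lemma localConn_nonneg (M : Matroid α) [M.Finite] (X Y : Set α) : 0 ≤ M.localConn X Y := by
  have h := rFun_submod M X Y
  simp only [localConn]
  omega

lemma localConn_triple (M : Matroid α) (X Y Z : Set α) :
    M.localConn X Y + M.localConn (X ∪ Y) Z = M.localConn X (Y ∪ Z) + M.localConn Y Z := by
  simp only [localConn]
  rw [union_assoc]
  ring

lemma localConn_le_localConn_union_left (M : Matroid α) [M.Finite] (X Y Z : Set α) :
    M.localConn X Z ≤ M.localConn (X ∪ Y) Z := by
  have h := rFun_submod M (X ∪ Y) (X ∪ Z)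
  have h2 : (X ∪ Y) ∪ (X ∪ Z) = X ∪ (Y ∪ Z) := by
    rw [union_union_union_comm, union_self]
  have h3 : M.rFun X ≤ M.rFun ((X ∪ Y) ∩ (X ∪ Z)) :=
    rFun_mono M (subset_inter subset_union_left subset_union_left)
  rw [h2] at h
  simp only [localConn]
  rw [union_assoc]
  omega

lemma localConn_le_conn (M : Matroid α) [M.Finite] (hX : X ⊆ M.E \ A) (hA : A ⊆ M.E) :
    M.localConn X A ≤ M.conn A := by
  have h := rFun_submod M (X ∪ A) (M.E \ A)
  have h2 : (X ∪ A) ∪ (M.E \ A) = M.E := by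
    rw [union_assoc, union_diff_cancel hA, union_eq_self_of_subset_left (hX.trans diff_subset)]
  have h3 : M.rFun X ≤ M.rFun ((X ∪ A) ∩ (M.E \ A)) :=
    rFun_mono M (subset_inter subset_union_left hX)
  rw [h2] at h
  simp only [localConn, conn]
  omega

lemma conn_union_add_localConn_le (M : Matroid α) [M.Finite] (h : Disjoint X Y) :
    M.conn (X ∪ Y) + M.localConn X Y ≤ M.conn X + M.conn Y := by
  have hsub := rFun_submod M (M.E \ X) (M.E \ Y)
  have h1 : (M.E \ X) ∪ (M.E \ Y) = M.E := by
    rw [← diff_inter, h.inter_eq, diff_empty]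
  have h2 : (M.E \ X) ∩ (M.E \ Y) = M.E \ (X ∪ Y) := diff_inter_diff
  rw [h1, h2] at hsub
  simp only [conn, localConn]
  omega

lemma conn_submod (M : Matroid α) [M.Finite] (X Y : Set α) :
    M.conn (X ∪ Y) + M.conn (X ∩ Y) ≤ M.conn X + M.conn Y := by
  have h1 := rFun_submod M X Y
  have h2 := rFun_submod M (M.E \ X) (M.E \ Y)
  rw [diff_inter_diff, ← diff_inter] at h2
  simp only [conn]
  omega

lemma conn_add_conn_eq (M : Matroid α) [M.Finite] (hXY : Disjoint X Y) (hX : X ⊆ M.E)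
    (hY : Y ⊆ M.E) :
    M.conn X + M.conn Y = M.conn (X ∪ Y) + M.localConn X Y + M.localCoconn X Y := by
  have hfin := M.ground_finite
  have d1 := M.dual_rFun_add hX
  have d2 := M.dual_rFun_add hY
  have d3 := M.dual_rFun_add (union_subset hX hY)
  have hcard : (X ∪ Y).ncard = X.ncard + Y.ncard :=
    ncard_union_eq hXY (hfin.subset hX) (hfin.subset hY)
  simp only [conn, localConn, localCoconn]
  omega

end AuxiliaryLemmas

/-- The key rank-inequality argument: two steps cannot both be "specially placed"
on the primal side. Stated for an abstract finite matroid. -/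
lemma two_special_steps_false (M : Matroid α) [M.Finite] {L R Qi Qj : Set α}
    (hL : L ⊆ M.E) (hR : R ⊆ M.E) (hQi : Qi ⊆ M.E) (hQj : Qj ⊆ M.E)
    (dLQi : Disjoint L Qi) (dLQj : Disjoint L Qj) (dRQi : Disjoint R Qi)
    (dRQj : Disjoint R Qj) (dQiQj : Disjoint Qi Qj)
    (hLQi : M.localConn L Qi = 2) (hLQj : M.localConn L Qj = 2)
    (hRQi : M.localConn R Qi = 2) (hRQj : M.localConn R Qj = 2)
    (hLR : M.localConn L R = 2)
    (cQi : M.conn Qi = 2) (cQj : M.conn Qj = 2) (hij : 3 ≤ M.conn (Qi ∪ Qj)) : False := by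
  have idL := M.localConn_triple L Qi Qj
  have monoL := M.localConn_le_localConn_union_left L Qi Qj
  have idR := M.localConn_triple R Qi Qj
  have monoR := M.localConn_le_localConn_union_left R Qi Qj
  have idH := M.localConn_triple L R (Qi ∪ Qj)
  have monoH : M.localConn L (Qi ∪ Qj) ≤ M.localConn L (R ∪ (Qi ∪ Qj)) := by
    rw [M.localConn_comm L (Qi ∪ Qj), M.localConn_comm L (R ∪ (Qi ∪ Qj)), union_comm R]
    exact M.localConn_le_localConn_union_left (Qi ∪ Qj) R L
  have hkappa : M.localConn (L ∪ R) (Qi ∪ Qj) ≤ M.conn (Qi ∪ Qj) := by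
    refine M.localConn_le_conn (subset_diff.mpr ⟨union_subset hL hR, ?_⟩)
      (union_subset hQi hQj)
    exact (dLQi.union_right dLQj).union_left (dRQi.union_right dRQj)
  have hub := M.conn_union_add_localConn_le dQiQj
  linarith [M.localConn_nonneg Qi Qj]

section PathFacts

variable {M : Matroid α} {L R : Set α} {n : ℕ} {Q : Fin n → Set α}

lemma Is4Path.subset_ground_L (p : Is4Path M L R Q) : L ⊆ M.E :=
  p.ground_eq ▸ subset_union_left.trans subset_union_left

lemma Is4Path.subset_ground_R (p : Is4Path M L R Q) : R ⊆ M.E :=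
  p.ground_eq ▸ subset_union_right

lemma Is4Path.subset_ground_Q (p : Is4Path M L R Q) (i : Fin n) : Q i ⊆ M.E :=
  p.ground_eq ▸ (subset_iUnion Q i).trans (subset_union_right.trans subset_union_left)

lemma Is4Path.conn_L (p : Is4Path M L R Q) : M.conn L = 3 := by
  have h0 := p.steps 0 (Nat.zero_le n)
  simp only [Nat.not_lt_zero, setOf_false, mem_empty_iff_false, iUnion_of_empty,
    iUnion_empty, union_empty] at h0
  exact h0

lemma Is4Path.compl_R (p : Is4Path M L R Q) : M.E \ R = L ∪ ⋃ i, Q i := by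
  rw [← p.ground_eq]
  apply union_diff_cancel_right
  have hd : Disjoint (L ∪ ⋃ i, Q i) R :=
    p.disj_LR.union_left (disjoint_iUnion_left.mpr fun i => (p.disj_RQ i).symm)
  exact hd.inter_eq.le

lemma Is4Path.conn_R (p : Is4Path M L R Q) : M.conn R = 3 := by
  have h0 := p.steps n le_rfl
  have hU : {i : Fin n | (i : ℕ) < n} = univ := by
    ext i; simp only [mem_setOf_eq, mem_univ, iff_true]; exact i.isLt
  rw [hU, biUnion_univ] at h0
  rw [← M.conn_eq_conn_compl p.subset_ground_R, p.compl_R]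
  exact h0

end PathFacts

/-- In the mixed case, `⊓(L,R) = 2 = ⊓*(L,R)` is impossible when `n ≥ 2`. -/
lemma mixed_case_false (M : Matroid α) [M.Finite] {n : ℕ} {L R : Set α} {Q : Fin n → Set α}
    (h : Is4cFlexipath M 2 L R Q) {i j : Fin n} (hij : i ≠ j)
    (hLR : M.localConn L R = 2) (hLR' : M.localCoconn L R = 2) : False := by
  have hQ1 : Q ∘ ⇑(1 : Equiv.Perm (Fin n)) = Q := rfl
  have P : Is4Path M L R Q := hQ1 ▸ h.flexi 1
  have hL := P.subset_ground_L
  have hR := P.subset_ground_R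
  have hQ := P.subset_ground_Q
  -- n ≥ 2
  have hn : 2 ≤ n := by
    by_contra hn
    push_neg at hn
    interval_cases n
    · exact i.elim0
    · exact hij (Subsingleton.elim i j)
  -- build the permutation τ with τ ⟨n-1⟩ = i and τ ⟨n-2⟩ = j
  have hn1 : n - 1 < n := by omega
  have hn2 : n - 2 < n := by omega
  set a : Fin n := ⟨n - 1, hn1⟩ with ha
  set b : Fin n := ⟨n - 2, hn2⟩ with hb
  have hab : a ≠ b := by
    simp only [a, b, Fin.ext_iff, ne_eq]
    omega
  set σ1 : Equiv.Perm (Fin n) := Equiv.swap i a with hσ1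
  have hca : σ1 j ≠ a := by
    intro hc
    apply hij
    have hc2 : σ1 (σ1 j) = σ1 a := by rw [hc]
    rw [show σ1 (σ1 j) = j from Equiv.swap_apply_self i a j,
      show σ1 a = i from Equiv.swap_apply_right i a] at hc2
    exact hc2.symm
  set τ : Equiv.Perm (Fin n) := (Equiv.swap b (σ1 j)).trans σ1 with hτ
  have hτa : τ a = i := by
    simp only [τ, Equiv.trans_apply]
    rw [Equiv.swap_apply_of_ne_of_ne hab (Ne.symm hca)]
    exact Equiv.swap_apply_right i a
  have hτb : τ b = j := by
    simp only [τ, Equiv.trans_apply, Equiv.swap_apply_left, σ1]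
    exact Equiv.swap_apply_self i a j
  have hiff : ∀ m : Fin n, (m : ℕ) < n - 2 ↔ (τ m ≠ i ∧ τ m ≠ j) := by
    intro m
    have h1 : τ m = i ↔ m = a := by
      rw [← hτa]; exact ⟨fun hh => τ.injective hh, fun hh => hh ▸ rfl⟩
    have h2 : τ m = j ↔ m = b := by
      rw [← hτb]; exact ⟨fun hh => τ.injective hh, fun hh => hh ▸ rfl⟩
    simp only [ne_eq, h1, h2]
    have hm := m.isLt
    simp only [Fin.ext_iff, a, b, ne_eq]
    omega
  set S : Set (Fin n) := {k : Fin n | k ≠ i ∧ k ≠ j} with hS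
  set U : Set α := ⋃ k ∈ S, Q k with hU
  have hset : (⋃ m ∈ {m : Fin n | (m : ℕ) < n - 2}, (Q ∘ τ) m) = U := by
    ext x
    simp only [hU, hS, mem_iUnion, mem_setOf_eq, exists_prop, Function.comp_apply]
    constructor
    · rintro ⟨m, hm, hx⟩
      exact ⟨τ m, (hiff m).mp hm, hx⟩
    · rintro ⟨k, hk, hx⟩
      refine ⟨τ.symm k, ?_, ?_⟩
      · rw [hiff]; rw [τ.apply_symm_apply]; exact hk
      · rw [τ.apply_symm_apply]; exact hx
  have connY : M.conn (L ∪ U) = 3 := by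
    have := (h.flexi τ).steps (n - 2) (by omega)
    rwa [hset] at this
  -- conn (L ∪ R) = 2
  have hconnLR : M.conn (L ∪ R) = 2 := by
    have := M.conn_add_conn_eq P.disj_LR hL hR
    rw [P.conn_L, P.conn_R, hLR, hLR'] at this
    linarith
  -- set identities
  have hint : (L ∪ R) ∩ (L ∪ U) = L := by
    apply Subset.antisymm
    · rintro x ⟨hx1 | hx1, hx2⟩
      · exact hx1
      rcases hx2 with hx2 | hx2
      · exact hx2
      · simp only [hU, hS, mem_iUnion, mem_setOf_eq, exists_prop] at hx2
        obtain ⟨k, _, hxk⟩ := hx2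
        exact absurd hxk (disjoint_left.mp (P.disj_RQ k) hx1)
    · exact subset_inter subset_union_left subset_union_left
  have huni : (L ∪ R) ∪ (L ∪ U) = M.E \ (Q i ∪ Q j) := by
    apply Subset.antisymm
    · rintro x (hx | hx)
      · rcases hx with hx | hx
        · exact ⟨hL hx, fun hc => hc.elim
            (fun hc => disjoint_left.mp (P.disj_LQ i) hx hc)
            (fun hc => disjoint_left.mp (P.disj_LQ j) hx hc)⟩
        · exact ⟨hR hx, fun hc => hc.elim
            (fun hc => disjoint_left.mp (P.disj_RQ i) hx hc)
            (fun hc => disjoint_left.mp (P.disj_RQ j) hx hc)⟩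
      · rcases hx with hx | hx
        · exact ⟨hL hx, fun hc => hc.elim
            (fun hc => disjoint_left.mp (P.disj_LQ i) hx hc)
            (fun hc => disjoint_left.mp (P.disj_LQ j) hx hc)⟩
        · simp only [hU, hS, mem_iUnion, mem_setOf_eq, exists_prop] at hx
          obtain ⟨k, ⟨hki, hkj⟩, hxk⟩ := hx
          refine ⟨hQ k hxk, fun hc => hc.elim
            (fun hc => disjoint_left.mp (P.disj_QQ k i hki) hxk hc)
            (fun hc => disjoint_left.mp (P.disj_QQ k j hkj) hxk hc)⟩
    · rintro x ⟨hxE, hxQ⟩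
      have := P.ground_eq ▸ hxE
      rcases this with (hx | hx) | hx
      · exact Or.inl (Or.inl hx)
      · simp only [mem_iUnion] at hx
        obtain ⟨k, hxk⟩ := hx
        have hki : k ≠ i := fun hc => hxQ (Or.inl (hc ▸ hxk))
        have hkj : k ≠ j := fun hc => hxQ (Or.inr (hc ▸ hxk))
        refine Or.inr (Or.inr ?_)
        simp only [hU, hS, mem_iUnion, mem_setOf_eq, exists_prop]
        exact ⟨k, ⟨hki, hkj⟩, hxk⟩
      · exact Or.inl (Or.inr hx)
  have hsub := M.conn_submod (L ∪ R) (L ∪ U)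
  rw [hint, huni, M.conn_eq_conn_compl (union_subset (hQ i) (hQ j)), P.conn_L, connY,
    hconnLR] at hsub
  have h3 := h.conn_two_steps i j hij
  omega


theorem speciallyPlaced_subsingleton (M : Matroid α) [M.Finite] {n : ℕ}
    (L R : Set α) (Q : Fin n → Set α) (h : Is4cFlexipath M 2 L R Q)
    (i j : Fin n) (hi : SpeciallyPlaced M L R Q i) (hj : SpeciallyPlaced M L R Q j) :
    i = j := by
  by_contra hij
  have hQ1 : Q ∘ ⇑(1 : Equiv.Perm (Fin n)) = Q := rfl
  have P : Is4Path M L R Q := hQ1 ▸ h.flexi 1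
  have hL := P.subset_ground_L
  have hR := P.subset_ground_R
  have hQ := P.subset_ground_Q
  have h3 : 3 ≤ M.conn (Q i ∪ Q j) := by
    have := h.conn_two_steps i j hij; omega
  rcases hi with hi | hi <;> rcases hj with hj | hj
  · exact two_special_steps_false M hL hR (hQ i) (hQ j) (P.disj_LQ i) (P.disj_LQ j)
      (P.disj_RQ i) (P.disj_RQ j) (P.disj_QQ i j hij)
      hi.2.1 hj.2.1 hi.2.2 hj.2.2 hi.1 (h.conn_step i) (h.conn_step j) h3
  · exact mixed_case_false M h hij hi.1 hj.1
  · exact mixed_case_false M h hij hj.1 hi.1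
  · refine two_special_steps_false M✶ hL hR (hQ i) (hQ j) (P.disj_LQ i) (P.disj_LQ j)
      (P.disj_RQ i) (P.disj_RQ j) (P.disj_QQ i j hij)
      hi.2.1 hj.2.1 hi.2.2 hj.2.2 hi.1 ?_ ?_ ?_
    · rw [conn_dual M (hQ i)]; exact h.conn_step i
    · rw [conn_dual M (hQ j)]; exact h.conn_step j
    · rw [conn_dual M (union_subset (hQ i) (hQ j))]; exact h3

end Matroid
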